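/- (Piecewise-linear lemma) Let M ⊆ 𝕊² be an orthogonal-pair-free set, and define G(M) = ⋃_{y∈M} G(y), M₁ = {z ∈ 𝕊² : G(z) ⊆ G(M)}, M₂ = M₁ \ G(M). Let x, y ∈ M₂ with x ≠ y, and suppose x ∼ y. Then x ≠ −y, d(x,y) < π/2, and arc(x,y) ⊆ M₂. -/

import Mathlib

open Metric Set MeasureTheory Filter
open scoped ENNReal Topology

noncomputable section

abbrev E3 := EuclideanSpace ℝ (Fin 3)

/-- Real inner product on ℝ³. -/
def rinner (p q : E3) : ℝ := inner ℝ p q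

/-- The unit sphere 𝕊² in ℝ³. -/
def sphere2 : Set E3 := Metric.sphere (0 : E3) 1

def northPole : E3 := EuclideanSpace.single (2 : Fin 3) (1 : ℝ)
def southPole : E3 := EuclideanSpace.single (2 : Fin 3) (-1 : ℝ)

/-- Geodesic distance on the sphere: d(p,q) = arccos⟨p,q⟩. -/
def gdist (p q : E3) : ℝ := Real.arccos (rinner p q)

/-- Geodesic distance from a point to a set. -/
def gdistToSet (y : E3) (B : Set E3) : ℝ := sInf (gdist y '' B)

/-- Open geodesic cap/ball of radius r centered at p. -/
def cap (p : E3) (r : ℝ) : Set E3 := {q ∈ sphere2 | gdist p q < r}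

/-- A set is orthogonal-pair-free if no two distinct points of it are orthogonal. -/
def OPF (A : Set E3) : Prop :=
  ∀ p ∈ A, ∀ q ∈ A, p ≠ q → rinner p q ≠ 0

/-- The minor great-circle arc arc(x,y) = {u/‖u‖ : u ∈ [x,y]}. -/
def arc (x y : E3) : Set E3 := (fun u : E3 => ‖u‖⁻¹ • u) '' segment ℝ x y

/-- Spherical convexity. -/
def SphConvex (S : Set E3) : Prop :=
  ∀ x ∈ S, ∀ y ∈ S, x ≠ -y → arc x y ⊆ S

/-- The surface measure σ on 𝕊² (2-dimensional Hausdorff measure, σ(𝕊²) = 4π). -/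
def sigmaM : Measure E3 := MeasureTheory.Measure.hausdorffMeasure 2

/-- The normalized surface measure μ, μ(𝕊²) = 1. -/
def muS : Measure E3 := (ENNReal.ofReal (4 * Real.pi))⁻¹ • sigmaM

/-- 𝒜: orthogonal-pair-free subsets of 𝕊² that are finite unions of pairwise
mutually disjoint (disjoint closures) spherically convex sets. -/
def memA (S : Set E3) : Prop :=
  S ⊆ sphere2 ∧ OPF S ∧
  ∃ (n : ℕ) (C : Fin n → Set E3),
    (∀ i, C i ⊆ sphere2 ∧ SphConvex (C i)) ∧
    (Pairwise fun i j => closure (C i) ∩ closure (C j) = ∅) ∧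
    S = ⋃ i, C i

/-- 𝒜ₖ: as 𝒜 but with at most k convex pieces. -/
def memAk (k : ℕ) (S : Set E3) : Prop :=
  S ⊆ sphere2 ∧ OPF S ∧
  ∃ n : ℕ, n ≤ k ∧ ∃ C : Fin n → Set E3,
    (∀ i, C i ⊆ sphere2 ∧ SphConvex (C i)) ∧
    (Pairwise fun i j => closure (C i) ∩ closure (C j) = ∅) ∧
    S = ⋃ i, C i

/-- Azimuthal angle of the (p₁,p₂) components of a point. -/
def azimuth (p : E3) : ℝ := Complex.arg ((p 0 : ℂ) + (p 1 : ℂ) * Complex.I)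

/-- The azimuthal angle lies in [a,b] modulo 2π. -/
def azIn (p : E3) (a b : ℝ) : Prop :=
  ∃ m : ℤ, a ≤ azimuth p + 2 * Real.pi * (m : ℝ) ∧ azimuth p + 2 * Real.pi * (m : ℝ) ≤ b

/-- The level-k dyadic cell with indices i, j. -/
def dyadicCell (k i j : ℕ) : Set E3 :=
  {p ∈ sphere2 |
    ((i : ℝ) * (2 : ℝ)⁻¹ ^ k - 1 ≤ p 2 ∧ p 2 ≤ ((i : ℝ) + 1) * (2 : ℝ)⁻¹ ^ k - 1) ∧
    azIn p (Real.pi / 2 + (j : ℝ) * Real.pi * (2 : ℝ)⁻¹ ^ k)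
           (Real.pi / 2 + ((j : ℝ) + 1) * Real.pi * (2 : ℝ)⁻¹ ^ k)}

/-- c is a level-k dyadic cell. -/
def IsDyadicCell (k : ℕ) (c : Set E3) : Prop :=
  ∃ i j : ℕ, i < 2 ^ (k + 1) ∧ j < 2 ^ (k + 1) ∧ c = dyadicCell k i j

/-- Interior of c relative to 𝕊². -/
def relInterior (c : Set E3) : Set E3 :=
  {x ∈ sphere2 | ∃ U : Set E3, IsOpen U ∧ x ∈ U ∧ U ∩ sphere2 ⊆ c}

/-- Boundary of c relative to 𝕊². -/
def relBd (c : Set E3) : Set E3 := closure c ∩ closure (sphere2 \ c)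

/-- ℬ: orthogonal-pair-free finite unions of pairwise almost disjoint dyadic cells. -/
def memB (S : Set E3) : Prop :=
  OPF S ∧
  ∃ (n : ℕ) (lev : Fin n → ℕ) (c : Fin n → Set E3),
    (∀ i, IsDyadicCell (lev i) (c i)) ∧
    (Pairwise fun i j => relInterior (c i) ∩ relInterior (c j) = ∅) ∧
    S = ⋃ i, c i

/-- The great circle polar to y. -/
def polarGC (y : E3) : Set E3 := {z ∈ sphere2 | rinner y z = 0}

/-- G(M) = ⋃_{y ∈ M} G(y). -/
def GM (M : Set E3) : Set E3 := ⋃ y ∈ M, polarGC y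

/-- M₁ = {z ∈ 𝕊² : G(z) ⊆ G(M)}. -/
def Mone (M : Set E3) : Set E3 := {z ∈ sphere2 | polarGC z ⊆ GM M}

/-- M₂ = M₁ \ G(M). -/
def Mtwo (M : Set E3) : Set E3 := Mone M \ GM M

/-- x ∼ y: joined by a finite piecewise-geodesic path inside A. -/
def chainRel (A : Set E3) (x y : E3) : Prop :=
  ∃ (m : ℕ) (s : ℕ → E3), s 0 = x ∧ s m = y ∧
    ∀ l, l < m → s l ≠ -s (l + 1) ∧ arc (s l) (s (l + 1)) ⊆ A

/-- Hausdorff distance with respect to the geodesic metric. -/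
def geoHausdorff (U V : Set E3) : ℝ :=
  max (⨆ x ∈ U, gdistToSet x V) (⨆ y ∈ V, gdistToSet y U)

/-- Geodesic distance between two sets. -/
def gsetDist (A B : Set E3) : ℝ := sInf (Set.image2 gdist A B)

/-! If `⟨x,u⟩⟨y,u⟩ ≤ 0`, the piecewise-geodesic path from `x` to `y` inside `M₂` meets the great
circle `G(u)` at some `p ∈ M₂`. As `G(p) ⊆ G(M)`, this puts `u` in `G(M)`; as `p ∉ G(M)`, `u` is
neither in `M` nor polar to `x`. With `u = x` this gives `⟨x,y⟩ > 0`. For `w` on `arc(x,y)`, every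
`u ⊥ w` satisfies `⟨x,u⟩⟨y,u⟩ ≤ 0`, so `G(w) ⊆ G(M)` and `w ∉ G(M)`. -/

lemma zero_mem_segment_iff_mul_nonpos {a b : ℝ} : (0 : ℝ) ∈ segment ℝ a b ↔ a * b ≤ 0 := by
  rw [segment_eq_Icc', Set.mem_Icc, min_le_iff, le_max_iff]
  constructor
  · rintro ⟨ha | hb, ha' | hb'⟩
    · rw [le_antisymm ha ha', zero_mul]
    · exact mul_nonpos_of_nonpos_of_nonneg ha hb'
    · exact mul_nonpos_of_nonneg_of_nonpos ha' hb
    · rw [le_antisymm hb hb', mul_zero]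
  · intro h
    rcases mul_nonpos_iff.1 h with ⟨ha, hb⟩ | ⟨ha, hb⟩
    exacts [⟨.inr hb, .inl ha⟩, ⟨.inl ha, .inr hb⟩]

lemma rinner_comm (p q : E3) : rinner p q = rinner q p := real_inner_comm q p

lemma rinner_smul_left (c : ℝ) (p q : E3) : rinner (c • p) q = c * rinner p q :=
  real_inner_smul_left p q c

lemma rinner_neg_right (p q : E3) : rinner p (-q) = -rinner p q := inner_neg_right p q

lemma image_rinner_segment (x y u : E3) :
    (rinner · u) '' segment ℝ x y = segment ℝ (rinner x u) (rinner y u) := by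
  simpa [rinner, real_inner_comm u] using image_segment ℝ (innerₛₗ ℝ u).toAffineMap x y

lemma zero_notMem_segment_of_rinner_pos {x y u : E3} (hx : 0 < rinner u x)
    (hy : 0 < rinner u y) : (0 : E3) ∉ segment ℝ x y := fun h0 => by
  simpa [rinner] using (convex_halfSpace_gt (innerₛₗ ℝ u).isLinear 0).segment_subset hx hy h0

lemma exists_mem_arc_rinner_eq_zero {x y u : E3} (h : rinner x u * rinner y u ≤ 0) :
    ∃ p ∈ arc x y, rinner p u = 0 := by
  obtain ⟨v, hv, hvu⟩ : (0 : ℝ) ∈ (rinner · u) '' segment ℝ x y := by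
    rwa [image_rinner_segment, zero_mem_segment_iff_mul_nonpos]
  exact ⟨_, ⟨v, hv, rfl⟩, by rw [rinner_smul_left, show rinner v u = 0 from hvu, mul_zero]⟩

lemma rinner_mul_nonpos_of_mem_arc {x y u w : E3} (h0 : (0 : E3) ∉ segment ℝ x y)
    (hw : w ∈ arc x y) (hwu : rinner w u = 0) : rinner x u * rinner y u ≤ 0 := by
  obtain ⟨v, hv, rfl⟩ := hw
  have hvu : rinner v u = 0 := by
    rw [rinner_smul_left] at hwu
    exact (mul_eq_zero.1 hwu).resolve_left
      (inv_ne_zero (norm_ne_zero_iff.2 (ne_of_mem_of_not_mem hv h0)))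
  rw [← zero_mem_segment_iff_mul_nonpos, ← image_rinner_segment]
  exact ⟨v, hv, hvu⟩

lemma arc_subset_sphere2 {x y : E3} (h0 : (0 : E3) ∉ segment ℝ x y) : arc x y ⊆ sphere2 := by
  rintro _ ⟨v, hv, rfl⟩
  rw [sphere2, mem_sphere_zero_iff_norm, norm_smul, norm_inv, norm_norm,
    inv_mul_cancel₀ (norm_ne_zero_iff.2 (ne_of_mem_of_not_mem hv h0))]

lemma chainRel.exists_rinner_eq_zero {A : Set E3} {x y u : E3} (h : chainRel A x y) (hx : x ∈ A)
    (hxu : rinner x u ≤ 0) (hyu : 0 ≤ rinner y u) : ∃ p ∈ A, rinner p u = 0 := by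
  obtain ⟨m, s, rfl, rfl, hs⟩ := h
  induction m with
  | zero => exact ⟨s 0, hx, le_antisymm hxu hyu⟩
  | succ m ih =>
    by_cases hm : 0 ≤ rinner (s m) u
    · exact ih (fun l hl => hs l (hl.trans m.lt_succ_self)) hm
    · obtain ⟨p, hp, hpu⟩ :=
        exists_mem_arc_rinner_eq_zero (mul_nonpos_of_nonpos_of_nonneg (not_le.1 hm).le hyu)
      exact ⟨p, (hs m m.lt_succ_self).2 hp, hpu⟩

lemma chainRel.exists_rinner_eq_zero_of_mul_nonpos {A : Set E3} {x y u : E3}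
    (h : chainRel A x y) (hx : x ∈ A) (hu : rinner x u * rinner y u ≤ 0) :
    ∃ p ∈ A, rinner p u = 0 := by
  rcases mul_nonpos_iff.1 hu with ⟨hxu, hyu⟩ | ⟨hxu, hyu⟩
  · obtain ⟨p, hp, hpu⟩ := h.exists_rinner_eq_zero (u := -u) hx
      (by rwa [rinner_neg_right, neg_nonpos]) (by rwa [rinner_neg_right, neg_nonneg])
    exact ⟨p, hp, by rwa [rinner_neg_right, neg_eq_zero] at hpu⟩
  · exact h.exists_rinner_eq_zero hx hxu hyu

lemma rinner_ne_zero_of_mem_Mtwo {M : Set E3} {p q : E3} (hp : p ∈ Mtwo M)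
    (hq : polarGC q ⊆ GM M) : rinner q p ≠ 0 :=
  fun h => hp.2 (hq ⟨hp.1.1, h⟩)

lemma mem_Mtwo_of_forall_rinner_eq_zero {M : Set E3} {w : E3} (hw : w ∈ sphere2)
    (h : ∀ u, rinner w u = 0 → ∃ p ∈ Mtwo M, rinner p u = 0) : w ∈ Mtwo M := by
  refine ⟨⟨hw, fun u hu => ?_⟩, fun hwM => ?_⟩
  · obtain ⟨p, hp, hpu⟩ := h u hu.2
    exact hp.1.2 ⟨hu.1, hpu⟩
  · obtain ⟨q, hq, -, hqw⟩ := mem_iUnion₂.1 hwM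
    obtain ⟨p, hp, hpq⟩ := h q (by rwa [rinner_comm])
    exact rinner_ne_zero_of_mem_Mtwo hp (subset_biUnion_of_mem (u := polarGC) hq)
      (by rwa [rinner_comm])

theorem stmt11_general (M : Set E3) (x y : E3) (hx : x ∈ Mtwo M) (hchain : chainRel (Mtwo M) x y) :
    x ≠ -y ∧ gdist x y < Real.pi / 2 ∧ arc x y ⊆ Mtwo M := by
  have hcross (u : E3) (hu : rinner x u * rinner y u ≤ 0) : ∃ p ∈ Mtwo M, rinner p u = 0 :=
    hchain.exists_rinner_eq_zero_of_mul_nonpos hx hu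
  have hxx : 0 < rinner x x := by
    rw [rinner, real_inner_self_eq_norm_sq, mem_sphere_zero_iff_norm.1 hx.1.1]
    norm_num
  have hxy : 0 < rinner x y := by
    by_contra! hxy
    obtain ⟨p, hp, hpx⟩ :=
      hcross x (mul_nonpos_of_nonneg_of_nonpos hxx.le (by rwa [rinner_comm]))
    exact rinner_ne_zero_of_mem_Mtwo hp hx.1.2 (by rwa [rinner_comm])
  have h0 : (0 : E3) ∉ segment ℝ x y := zero_notMem_segment_of_rinner_pos hxx hxy
  refine ⟨?_, Real.arccos_lt_pi_div_two.2 hxy, fun w hw =>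
    mem_Mtwo_of_forall_rinner_eq_zero (arc_subset_sphere2 h0 hw)
      fun u hu => hcross u (rinner_mul_nonpos_of_mem_arc h0 hw hu)⟩
  rintro rfl
  rw [rinner, inner_neg_left] at hxy
  linarith [real_inner_self_nonneg (x := y)]

/-- Piecewise-linear lemma. -/
theorem stmt11 (M : Set E3) (hM : M ⊆ sphere2) (hOPF : OPF M)
    (x y : E3) (hx : x ∈ Mtwo M) (hy : y ∈ Mtwo M) (hxy : x ≠ y)
    (hchain : chainRel (Mtwo M) x y) :
    x ≠ -y ∧ gdist x y < Real.pi / 2 ∧ arc x y ⊆ Mtwo M :=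
  stmt11_general M x y hx hchain
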